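/- Let μ = E ξ < ∞ and N the renewal counting process with first-passage time N(t) = inf{k : S_k > t}. Then for every n ∈ ℕ, μ E|N(μn) − n| = E(S_{N(μn)∨n} − S_{N(μn)∧n}) = E(|S_n − μn| ± (S_{N(μn)} − μn)) sandwiched as: E(|S_n − μn|) − E(S_{N(μn)} − μn) ≤ μ E|N(μn) − n| ≤ E(|S_n − μn|) + E(S_{N(μn)} − μn). -/

import Mathlib

/-!
Write `S k = ξ 0 + ⋯ + ξ (k - 1)`, `t = μ n` and `N = N(t)`. As `S` is nondecreasing, `i` lies
between `N` and `n` exactly when `i < n ↔ t < S i`, an event determined by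
`ξ 0, …, ξ (i - 1)` and hence independent of `ξ i`. Summing over `i` gives
`E|N - n| = ∑ᵢ P(i < n ↔ t < S i)` and, by Wald's argument, `E(S_{N ∨ n} - S_{N ∧ n}) = μ` times
the same sum, which is finite because the Chernoff bound `P(S i ≤ t) ≤ eᵗ (E e^{-ξ 0})ⁱ` is
geometric. The sandwich integrates the pointwise bound
`|(S_{N ∨ n} - S_{N ∧ n}) - |S n - t|| ≤ S N - t`, which only uses that `S` is monotone and
`S N > t`.
-/

open MeasureTheory ProbabilityTheory Filter Finset
open scoped ENNReal

/-- `sInf ∅ = 0` in `ℕ`, so this is `0` when `f` never exceeds `t`. -/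
noncomputable def firstPassage (f : ℕ → ℝ) (t : ℝ) : ℕ := sInf {k | t < f k}

section FirstPassage

variable {f : ℕ → ℝ} {t : ℝ}

theorem Monotone.abs_apply_max_sub_apply_min_sub_abs_le (hf : Monotone f) {m : ℕ} (hm : t < f m)
    (n : ℕ) : |f (max m n) - f (min m n) - (|f n - t|)| ≤ f m - t := by
  rw [abs_sub_le_iff]
  rcases le_total m n with h | h
  · rw [max_eq_right h, min_eq_left h]
    constructor <;> cases abs_cases (f n - t) <;> linarith [hf h]
  · rw [max_eq_left h, min_eq_right h]
    constructor <;> cases abs_cases (f n - t) <;> linarith [hf h]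

theorem lt_apply_firstPassage (h : ∃ k, t < f k) : t < f (firstPassage f t) := Nat.sInf_mem h

theorem firstPassage_le_iff (hf : Monotone f) (h : ∃ k, t < f k) {i : ℕ} :
    firstPassage f t ≤ i ↔ t < f i :=
  ⟨fun hi => (lt_apply_firstPassage h).trans_le (hf hi), fun hi => Nat.sInf_le hi⟩

theorem firstPassage_eq_iff (h : ∃ k, t < f k) {m : ℕ} :
    firstPassage f t = m ↔ t < f m ∧ ∀ k < m, f k ≤ t := by
  refine ⟨?_, fun ⟨hm, hlt⟩ => le_antisymm (Nat.sInf_le hm) (not_lt.1 fun hk => ?_)⟩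
  · rintro rfl
    exact ⟨lt_apply_firstPassage h, fun k hk => not_lt.1 (Nat.notMem_of_lt_sInf hk)⟩
  · exact (hlt _ hk).not_gt (lt_apply_firstPassage h)

theorem mem_Ico_min_max_firstPassage_iff (hf : Monotone f) (h : ∃ k, t < f k) {n i : ℕ} :
    i ∈ Ico (min (firstPassage f t) n) (max (firstPassage f t) n) ↔ (i < n ↔ t < f i) := by
  rw [← firstPassage_le_iff hf h, mem_Ico]
  omega

theorem tsum_indicator_eq_sum_Ico_firstPassage {M : Type*} [AddCommMonoid M] [TopologicalSpace M]
    (hf : Monotone f) (h : ∃ k, t < f k) (n : ℕ) (g : ℕ → M) :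
    ∑' i, {i | i < n ↔ t < f i}.indicator g i =
      ∑ i ∈ Ico (min (firstPassage f t) n) (max (firstPassage f t) n), g i := by
  rw [sum_eq_tsum_indicator]
  congr! 3
  ext i
  exact (mem_Ico_min_max_firstPassage_iff hf h).symm

end FirstPassage

section Integration

variable {Ω : Type*} [MeasurableSpace Ω] {P : Measure Ω}

theorem measurable_firstPassage {S : ℕ → Ω → ℝ} (hS : ∀ k, Measurable (S k)) (t : ℝ) :
    Measurable fun ω => firstPassage (S · ω) t := by
  refine measurable_to_countable' fun m => ?_
  have hpre : (fun ω => firstPassage (S · ω) t) ⁻¹' {m} =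
      {ω | t < S m ω ∧ ∀ k < m, S k ω ≤ t} ∪ {ω | m = 0 ∧ ∀ k, S k ω ≤ t} := by
    ext ω
    by_cases h : ∃ k, t < S k ω
    · have hne : ¬ ∀ k, S k ω ≤ t := by simpa using h
      simp [firstPassage_eq_iff h, hne]
    · simp only [not_exists, not_lt] at h
      have h0 : firstPassage (S · ω) t = 0 :=
        Nat.sInf_eq_zero.2 (Or.inr (Set.eq_empty_of_forall_notMem fun k => (h k).not_gt))
      simp_all [eq_comm]
  rw [hpre]
  measurability

theorem measurable_apply_of_measurable_index {S : ℕ → Ω → ℝ} (hS : ∀ k, Measurable (S k))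
    {M : Ω → ℕ} (hM : Measurable M) : Measurable fun ω => S (M ω) ω :=
  (measurable_from_prod_countable_left (f := fun p : Ω × ℕ => S p.2 p.1) hS).comp
    (measurable_id.prodMk hM)

theorem setLIntegral_preimage_eq_measure_mul_lintegral {β γ : Type*} [MeasurableSpace β]
    [MeasurableSpace γ] {X : Ω → β} {Y : Ω → γ} (hX : Measurable X) (hY : Measurable Y)
    (hXY : IndepFun X Y P) {B : Set β} (hB : MeasurableSet B) {g : γ → ℝ≥0∞}
    (hg : Measurable g) :
    ∫⁻ ω in X ⁻¹' B, g (Y ω) ∂P = P (X ⁻¹' B) * ∫⁻ ω, g (Y ω) ∂P := by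
  have hind : IndepFun (B.indicator (1 : β → ℝ≥0∞) ∘ X) (g ∘ Y) P :=
    hXY.comp (measurable_one.indicator hB) hg
  calc ∫⁻ ω in X ⁻¹' B, g (Y ω) ∂P
      = ∫⁻ ω, ((B.indicator (1 : β → ℝ≥0∞) ∘ X) * (g ∘ Y)) ω ∂P := by
        rw [← lintegral_indicator (hX hB)]
        congr 1 with ω
        by_cases hω : X ω ∈ B <;> simp [hω]
    _ = P (X ⁻¹' B) * ∫⁻ ω, g (Y ω) ∂P := by
        rw [lintegral_mul_eq_lintegral_mul_lintegral_of_indepFun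
          ((measurable_one.indicator hB).comp hX) (hg.comp hY) hind,
          ← lintegral_indicator_one (hX hB)]
        rfl

theorem integrable_and_integral_eq_toReal_of_lintegral_ofReal_eq {f : Ω → ℝ} {c : ℝ≥0∞}
    (h : ∫⁻ ω, ENNReal.ofReal (f ω) ∂P = c) (hc : c ≠ ∞) (hf : AEStronglyMeasurable f P)
    (h0 : 0 ≤ᵐ[P] f) :
    Integrable f P ∧ ∫ ω, f ω ∂P = c.toReal :=
  ⟨⟨hf, (hasFiniteIntegral_iff_ofReal h0).2 (h ▸ hc.lt_top)⟩,
    by rw [integral_eq_lintegral_of_nonneg_ae h0 hf, h]⟩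

theorem abs_integral_sub_integral_le {D F G : Ω → ℝ} (hD : Integrable D P) (hF : Integrable F P)
    (hG : Integrable G P) (h : ∀ᵐ ω ∂P, |D ω - F ω| ≤ G ω) :
    |∫ ω, D ω ∂P - ∫ ω, F ω ∂P| ≤ ∫ ω, G ω ∂P := by
  rw [← integral_sub hD hF]
  exact abs_integral_le_integral_abs.trans (integral_mono_ae (hD.sub hF).abs hG h)

theorem integrable_apply_of_integrable_apply_max_sub_apply_min {S : ℕ → Ω → ℝ}
    (hS : ∀ k, Measurable (S k)) (hmono : ∀ᵐ ω ∂P, Monotone (S · ω)) (h0 : ∀ᵐ ω ∂P, 0 ≤ S 0 ω)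
    {M : Ω → ℕ} (hM : Measurable M) {n : ℕ} (hn : Integrable (S n) P)
    (hD : Integrable (fun ω => S (max (M ω) n) ω - S (min (M ω) n) ω) P) :
    Integrable (fun ω => S (M ω) ω) P := by
  refine (hn.add hD).mono'
    (measurable_apply_of_measurable_index hS hM).aestronglyMeasurable ?_
  filter_upwards [hmono, h0] with ω hmono h0
  rw [Real.norm_eq_abs, abs_of_nonneg (h0.trans (hmono (Nat.zero_le _))), Pi.add_apply]
  rcases le_total (M ω) n with h | h
  · rw [max_eq_right h, min_eq_left h]
    linarith [hmono h]
  · rw [max_eq_left h, min_eq_right h]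
    linarith

theorem lintegral_ofReal_abs_firstPassage_sub {t : ℝ} {S : ℕ → Ω → ℝ} (hS : ∀ k, Measurable (S k))
    (hmono : ∀ᵐ ω ∂P, Monotone (S · ω)) (hcross : ∀ᵐ ω ∂P, ∃ k, t < S k ω) (n : ℕ) :
    ∫⁻ ω, ENNReal.ofReal |(firstPassage (S · ω) t : ℝ) - n| ∂P =
      ∑' i, P {ω | i < n ↔ t < S i ω} := by
  have hA : ∀ i, MeasurableSet {ω | i < n ↔ t < S i ω} := fun i => by measurability
  calc _ = ∫⁻ ω, ∑' i, {ω | i < n ↔ t < S i ω}.indicator 1 ω ∂P := by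
        refine lintegral_congr_ae ?_
        filter_upwards [hmono, hcross] with ω hmono hcross
        change _ = ∑' i, {i | i < n ↔ t < S i ω}.indicator 1 i
        rw [tsum_indicator_eq_sum_Ico_firstPassage hmono hcross]
        simp only [Pi.one_apply, sum_const, Nat.card_Ico, nsmul_eq_mul, mul_one]
        rw [← ENNReal.ofReal_natCast, Nat.cast_sub min_le_max, Nat.cast_max, Nat.cast_min,
          max_sub_min_eq_abs']
    _ = _ := by
        rw [lintegral_tsum fun i => (measurable_one.indicator (hA i)).aemeasurable]
        simp [lintegral_indicator_one (hA _)]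

theorem ae_monotone_sum_range {ξ : ℕ → Ω → ℝ} (hnonneg : ∀ i, ∀ᵐ ω ∂P, 0 ≤ ξ i ω) :
    ∀ᵐ ω ∂P, Monotone fun k => ∑ i ∈ range k, ξ i ω := by
  filter_upwards [ae_all_iff.2 hnonneg] with ω hω
  exact monotone_nat_of_le_succ fun k => by simpa [sum_range_succ] using hω k

theorem tsum_measure_iff_lt_ne_top [IsProbabilityMeasure P] {t : ℝ} {S : ℕ → Ω → ℝ}
    (h : ∑' i, P {ω | S i ω ≤ t} ≠ ∞) (n : ℕ) : ∑' i, P {ω | i < n ↔ t < S i ω} ≠ ∞ := by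
  have hle : ∀ i, P {ω | i < n ↔ t < S i ω} ≤
      P {ω | S i ω ≤ t} + (↑(range n) : Set ℕ).indicator 1 i := by
    intro i
    by_cases hi : i < n
    · simpa [hi] using prob_le_one.trans le_add_self
    · simp [hi]
  refine ne_top_of_le_ne_top ?_ (ENNReal.tsum_le_tsum hle)
  rw [ENNReal.tsum_add, ← sum_eq_tsum_indicator]
  simpa using h

theorem lintegral_ofReal_sum_range_max_sub_min {ξ : ℕ → Ω → ℝ} {t : ℝ}
    (hmeas : ∀ i, Measurable (ξ i)) (hindep : iIndepFun ξ P) (hnonneg : ∀ i, ∀ᵐ ω ∂P, 0 ≤ ξ i ω)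
    (hcross : ∀ᵐ ω ∂P, ∃ k, t < ∑ i ∈ range k, ξ i ω) {c : ℝ≥0∞}
    (hc : ∀ i, ∫⁻ ω, ENNReal.ofReal (ξ i ω) ∂P = c) (n : ℕ) :
    ∫⁻ ω, ENNReal.ofReal
        (∑ i ∈ range (max (firstPassage (fun k => ∑ i ∈ range k, ξ i ω) t) n), ξ i ω -
          ∑ i ∈ range (min (firstPassage (fun k => ∑ i ∈ range k, ξ i ω) t) n), ξ i ω) ∂P =
      (∑' i, P {ω | i < n ↔ t < ∑ j ∈ range i, ξ j ω}) * c := by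
  have hSm : ∀ k, Measurable fun ω => ∑ i ∈ range k, ξ i ω := fun k => by fun_prop
  have hA : ∀ i, MeasurableSet {ω | i < n ↔ t < ∑ j ∈ range i, ξ j ω} := fun i => by
    measurability
  have hwald : ∀ i, ∫⁻ ω in {ω | i < n ↔ t < ∑ j ∈ range i, ξ j ω}, ENNReal.ofReal (ξ i ω) ∂P =
      P {ω | i < n ↔ t < ∑ j ∈ range i, ξ j ω} * c := fun i => by
    have hind : IndepFun (fun ω => ∑ j ∈ range i, ξ j ω) (ξ i) P := by
      convert hindep.indepFun_finsetSum_of_notMem hmeas notMem_range_self using 1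
      ext ω
      simp
    rw [← hc i]
    exact setLIntegral_preimage_eq_measure_mul_lintegral (hSm i) (hmeas i) hind
      (B := {x | i < n ↔ t < x}) (by measurability) ENNReal.measurable_ofReal
  calc _ = ∫⁻ ω, ∑' i, {ω | i < n ↔ t < ∑ j ∈ range i, ξ j ω}.indicator
          (fun ω => ENNReal.ofReal (ξ i ω)) ω ∂P := by
        refine lintegral_congr_ae ?_
        filter_upwards [ae_all_iff.2 hnonneg, ae_monotone_sum_range hnonneg, hcross]
          with ω hnonneg hmono hcross
        change _ = ∑' i, {i | i < n ↔ t < ∑ j ∈ range i, ξ j ω}.indicator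
          (fun i => ENNReal.ofReal (ξ i ω)) i
        rw [tsum_indicator_eq_sum_Ico_firstPassage hmono hcross,
          ← ENNReal.ofReal_sum_of_nonneg fun i _ => hnonneg i, sum_Ico_eq_sub _ min_le_max]
    _ = _ := by
        rw [lintegral_tsum fun i => ((hmeas i).ennreal_ofReal.indicator (hA i)).aemeasurable,
          ← ENNReal.tsum_mul_right]
        simp_rw [lintegral_indicator (hA _), hwald]

end Integration

section PartialSums

variable {Ω : Type*} [MeasurableSpace Ω] {P : Measure Ω} [IsProbabilityMeasure P]
  {ξ : ℕ → Ω → ℝ}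

theorem mgf_lt_one_of_pos {X : Ω → ℝ} (hXm : AEMeasurable X P) (hX : ∀ᵐ ω ∂P, 0 < X ω) {s : ℝ}
    (hs : s < 0) : mgf X P s < 1 := by
  have hlt : ∀ᵐ ω ∂P, Real.exp (s * X ω) < 1 := by
    filter_upwards [hX] with ω hω
    exact Real.exp_lt_one_iff.2 (mul_neg_of_neg_of_pos hs hω)
  have hint : Integrable (fun ω => Real.exp (s * X ω)) P :=
    Integrable.mono' (integrable_const 1) (by fun_prop) (hlt.mono fun ω hω => by
      rw [Real.norm_eq_abs, abs_of_pos (Real.exp_pos _)]; exact hω.le)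
  have hpos : 0 < ∫ ω, (1 - Real.exp (s * X ω)) ∂P := by
    rw [integral_pos_iff_support_of_nonneg_ae (hlt.mono fun ω hω => sub_nonneg.2 hω.le)
      ((integrable_const 1).sub hint)]
    have hsupp : (Function.support fun ω => 1 - Real.exp (s * X ω)) ∈ ae P :=
      hlt.mono fun ω hω => (sub_pos.2 hω).ne'
    rw [measure_congr (ae_eq_univ.2 (mem_ae_iff.1 hsupp)), measure_univ]
    exact one_pos
  rw [integral_sub (integrable_const 1) hint] at hpos
  simpa [mgf] using hpos

theorem measureReal_sum_range_le_le_exp_mul_mgf_pow (hmeas : ∀ i, Measurable (ξ i))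
    (hindep : iIndepFun ξ P) (hident : ∀ i, P.map (ξ i) = P.map (ξ 0))
    (hnonneg : ∀ i, ∀ᵐ ω ∂P, 0 ≤ ξ i ω) (t : ℝ) (k : ℕ) :
    P.real {ω | ∑ i ∈ range k, ξ i ω ≤ t} ≤ Real.exp t * mgf (ξ 0) P (-1) ^ k := by
  have hint : Integrable (fun ω => Real.exp (-1 * (∑ i ∈ range k, ξ i) ω)) P := by
    refine Integrable.mono' (integrable_const 1) (by fun_prop) ?_
    filter_upwards [ae_all_iff.2 hnonneg] with ω hω
    rw [Real.norm_eq_abs, abs_of_pos (Real.exp_pos _), Real.exp_le_one_iff, Finset.sum_apply]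
    nlinarith [sum_nonneg fun i (_ : i ∈ range k) => hω i]
  have hmgf : ∀ i, mgf (ξ i) P (-1) = mgf (ξ 0) P (-1) := fun i => by
    rw [← mgf_id_map (hmeas i).aemeasurable, hident, mgf_id_map (hmeas 0).aemeasurable]
  simpa [hindep.mgf_sum hmeas, hmgf, Finset.sum_apply] using
    measure_le_le_exp_mul_mgf (X := ∑ i ∈ range k, ξ i) t (by norm_num) hint

theorem tsum_measure_sum_range_le_ne_top (hmeas : ∀ i, Measurable (ξ i)) (hindep : iIndepFun ξ P)
    (hident : ∀ i, P.map (ξ i) = P.map (ξ 0)) (hpos : ∀ i, ∀ᵐ ω ∂P, 0 < ξ i ω) (t : ℝ) :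
    ∑' k, P {ω | ∑ i ∈ range k, ξ i ω ≤ t} ≠ ∞ := by
  set r := mgf (ξ 0) P (-1)
  have hr : r < 1 := mgf_lt_one_of_pos (hmeas 0).aemeasurable (hpos 0) (by norm_num)
  have hsum : Summable fun k => Real.exp t * r ^ k :=
    (summable_geometric_of_lt_one mgf_nonneg hr).mul_left _
  refine ne_top_of_le_ne_top (b := ∑' k, ENNReal.ofReal (Real.exp t * r ^ k)) ?_
    (ENNReal.tsum_le_tsum fun k => ?_)
  · rw [← ENNReal.ofReal_tsum_of_nonneg
      (fun k => mul_nonneg (Real.exp_pos t).le (pow_nonneg mgf_nonneg k)) hsum]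
    exact ENNReal.ofReal_ne_top
  · rw [← ofReal_measureReal]
    exact ENNReal.ofReal_le_ofReal (measureReal_sum_range_le_le_exp_mul_mgf_pow hmeas hindep hident
      (fun i => (hpos i).mono fun ω hω => hω.le) t k)

theorem ae_exists_lt_sum_range (hmeas : ∀ i, Measurable (ξ i)) (hindep : iIndepFun ξ P)
    (hident : ∀ i, P.map (ξ i) = P.map (ξ 0)) (hpos : ∀ i, ∀ᵐ ω ∂P, 0 < ξ i ω) (t : ℝ) :
    ∀ᵐ ω ∂P, ∃ k, t < ∑ i ∈ range k, ξ i ω := by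
  filter_upwards [ae_eventually_notMem
    (tsum_measure_sum_range_le_ne_top hmeas hindep hident hpos t)] with ω hω
  obtain ⟨k, hk⟩ := hω.exists
  exact ⟨k, not_le.1 hk⟩

theorem integrable_and_mul_integral_abs_firstPassage_sub (hmeas : ∀ i, Measurable (ξ i))
    (hindep : iIndepFun ξ P) (hident : ∀ i, P.map (ξ i) = P.map (ξ 0))
    (hpos : ∀ i, ∀ᵐ ω ∂P, 0 < ξ i ω) (hInt : Integrable (ξ 0) P) {μ : ℝ}
    (hmean : ∫ ω, ξ 0 ω ∂P = μ) (t : ℝ) (n : ℕ) :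
    Integrable (fun ω =>
        ∑ i ∈ range (max (firstPassage (fun k => ∑ i ∈ range k, ξ i ω) t) n), ξ i ω -
          ∑ i ∈ range (min (firstPassage (fun k => ∑ i ∈ range k, ξ i ω) t) n), ξ i ω) P ∧
      μ * ∫ ω, |(firstPassage (fun k => ∑ i ∈ range k, ξ i ω) t : ℝ) - n| ∂P =
        ∫ ω, (∑ i ∈ range (max (firstPassage (fun k => ∑ i ∈ range k, ξ i ω) t) n), ξ i ω -
          ∑ i ∈ range (min (firstPassage (fun k => ∑ i ∈ range k, ξ i ω) t) n), ξ i ω) ∂P := by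
  have hnonneg : ∀ i, ∀ᵐ ω ∂P, 0 ≤ ξ i ω := fun i => (hpos i).mono fun _ h => h.le
  have hSm : ∀ k, Measurable fun ω => ∑ i ∈ range k, ξ i ω := fun k => by fun_prop
  have hmono := ae_monotone_sum_range hnonneg
  have hcross := ae_exists_lt_sum_range hmeas hindep hident hpos t
  have hfin := tsum_measure_iff_lt_ne_top
    (tsum_measure_sum_range_le_ne_top hmeas hindep hident hpos t) n
  have hc : ∀ i, ∫⁻ ω, ENNReal.ofReal (ξ i ω) ∂P = ENNReal.ofReal μ := fun i => by
    rw [← lintegral_map ENNReal.measurable_ofReal (hmeas i), hident i,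
      lintegral_map ENNReal.measurable_ofReal (hmeas 0),
      ← ofReal_integral_eq_lintegral_ofReal hInt (hnonneg 0), hmean]
  have hN := measurable_firstPassage hSm t
  obtain ⟨hD_int, hD⟩ := integrable_and_integral_eq_toReal_of_lintegral_ofReal_eq
    (lintegral_ofReal_sum_range_max_sub_min hmeas hindep hnonneg hcross hc n)
    (ENNReal.mul_ne_top hfin ENNReal.ofReal_ne_top)
    ((measurable_apply_of_measurable_index hSm (hN.max measurable_const)).sub
      (measurable_apply_of_measurable_index hSm (hN.min measurable_const))).aestronglyMeasurable
    (hmono.mono fun ω h => sub_nonneg.2 (h min_le_max))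
  obtain ⟨-, hNn⟩ := integrable_and_integral_eq_toReal_of_lintegral_ofReal_eq
    (lintegral_ofReal_abs_firstPassage_sub hSm hmono hcross n) hfin
    ((measurable_from_top.comp hN).sub_const _).abs.aestronglyMeasurable
    (ae_of_all _ fun _ => abs_nonneg _)
  have hμ : 0 ≤ μ := hmean ▸ integral_nonneg_of_ae (hnonneg 0)
  refine ⟨hD_int, ?_⟩
  rw [hD, hNn, ENNReal.toReal_mul, ENNReal.toReal_ofReal hμ, mul_comm]

end PartialSums

theorem wald_sandwich_renewal_general
    {Ω : Type*} [MeasurableSpace Ω] (P : Measure Ω) [IsProbabilityMeasure P]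
    (ξ : ℕ → Ω → ℝ) (hmeas : ∀ i, Measurable (ξ i))
    (hindep : ProbabilityTheory.iIndepFun ξ P)
    (hident : ∀ i, P.map (ξ i) = P.map (ξ 0))
    (hpos : ∀ i, ∀ᵐ ω ∂P, 0 < ξ i ω)
    (hInt : Integrable (ξ 0) P)
    (μ : ℝ) (hmean : ∫ ω, ξ 0 ω ∂P = μ)
    (n : ℕ) :
    (μ * ∫ ω, |((sInf {k : ℕ | μ * n < ∑ i ∈ Finset.range k, ξ i ω} : ℕ) : ℝ) - n| ∂P =
      ∫ ω, ((∑ i ∈ Finset.range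
          (max (sInf {k : ℕ | μ * n < ∑ i ∈ Finset.range k, ξ i ω}) n), ξ i ω) -
        (∑ i ∈ Finset.range
          (min (sInf {k : ℕ | μ * n < ∑ i ∈ Finset.range k, ξ i ω}) n), ξ i ω)) ∂P) ∧
    ((∫ ω, |(∑ i ∈ Finset.range n, ξ i ω) - μ * n| ∂P) -
        ((∫ ω, (∑ i ∈ Finset.range
            (sInf {k : ℕ | μ * n < ∑ i ∈ Finset.range k, ξ i ω}), ξ i ω) ∂P) - μ * n) ≤
      μ * ∫ ω, |((sInf {k : ℕ | μ * n < ∑ i ∈ Finset.range k, ξ i ω} : ℕ) : ℝ) - n| ∂P) ∧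
    (μ * ∫ ω, |((sInf {k : ℕ | μ * n < ∑ i ∈ Finset.range k, ξ i ω} : ℕ) : ℝ) - n| ∂P ≤
      (∫ ω, |(∑ i ∈ Finset.range n, ξ i ω) - μ * n| ∂P) +
        ((∫ ω, (∑ i ∈ Finset.range
            (sInf {k : ℕ | μ * n < ∑ i ∈ Finset.range k, ξ i ω}), ξ i ω) ∂P) - μ * n)) := by
  have hnonneg : ∀ i, ∀ᵐ ω ∂P, 0 ≤ ξ i ω := fun i => (hpos i).mono fun _ h => h.le
  have hSm : ∀ k, Measurable fun ω => ∑ i ∈ range k, ξ i ω := fun k => by fun_prop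
  have hSint : ∀ k, Integrable (fun ω => ∑ i ∈ range k, ξ i ω) P := fun k =>
    integrable_finsetSum _ fun i _ =>
      (IdentDistrib.mk (hmeas i).aemeasurable (hmeas 0).aemeasurable
        (hident i)).integrable_iff.2 hInt
  have hmono := ae_monotone_sum_range hnonneg
  obtain ⟨hD_int, hwald⟩ := integrable_and_mul_integral_abs_firstPassage_sub hmeas hindep hident
    hpos hInt hmean (μ * n) n
  have hSN_int := integrable_apply_of_integrable_apply_max_sub_apply_min hSm hmono
    (ae_of_all _ fun _ => (sum_range_zero _).ge) (measurable_firstPassage hSm (μ * n)) (hSint n)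
    hD_int
  have hsandwich := abs_integral_sub_integral_le hD_int
    ((hSint n).sub (integrable_const (μ * n))).abs (hSN_int.sub (integrable_const (μ * n))) (by
      filter_upwards [hmono, ae_exists_lt_sum_range hmeas hindep hident hpos (μ * n)]
        with ω hmono hcross
      exact hmono.abs_apply_max_sub_apply_min_sub_abs_le (lt_apply_firstPassage hcross) n)
  simp only [Pi.sub_apply] at hsandwich
  rw [integral_sub hSN_int (integrable_const _), integral_const, ← hwald] at hsandwich
  simp only [probReal_univ, smul_eq_mul, one_mul, firstPassage] at hsandwich hwald
  obtain ⟨hupper, hlower⟩ := abs_sub_le_iff.1 hsandwich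
  exact ⟨hwald, by linarith, by linarith⟩

/-- Wald sandwich for the first-passage renewal count. With
`N(t) = inf{k : S_k > t}`, for each `n`:
`μ E|N(μn) − n| = E(S_{N(μn)∨n} − S_{N(μn)∧n})` and
`E|S_n − μn| − E(S_{N(μn)} − μn) ≤ μ E|N(μn) − n| ≤ E|S_n − μn| + E(S_{N(μn)} − μn)`. -/
theorem wald_sandwich_renewal
    {Ω : Type*} [MeasurableSpace Ω] (P : Measure Ω) [IsProbabilityMeasure P]
    (ξ : ℕ → Ω → ℝ) (hmeas : ∀ i, Measurable (ξ i))
    (hindep : ProbabilityTheory.iIndepFun ξ P)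
    (hident : ∀ i, P.map (ξ i) = P.map (ξ 0))
    (hpos : ∀ i, ∀ᵐ ω ∂P, 0 < ξ i ω)
    (hInt : Integrable (ξ 0) P)
    (μ : ℝ) (hμpos : 0 < μ) (hmean : ∫ ω, ξ 0 ω ∂P = μ)
    (n : ℕ) :
    (μ * ∫ ω, |((sInf {k : ℕ | μ * n < ∑ i ∈ Finset.range k, ξ i ω} : ℕ) : ℝ) - n| ∂P =
      ∫ ω, ((∑ i ∈ Finset.range
          (max (sInf {k : ℕ | μ * n < ∑ i ∈ Finset.range k, ξ i ω}) n), ξ i ω) -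
        (∑ i ∈ Finset.range
          (min (sInf {k : ℕ | μ * n < ∑ i ∈ Finset.range k, ξ i ω}) n), ξ i ω)) ∂P) ∧
    ((∫ ω, |(∑ i ∈ Finset.range n, ξ i ω) - μ * n| ∂P) -
        ((∫ ω, (∑ i ∈ Finset.range
            (sInf {k : ℕ | μ * n < ∑ i ∈ Finset.range k, ξ i ω}), ξ i ω) ∂P) - μ * n) ≤
      μ * ∫ ω, |((sInf {k : ℕ | μ * n < ∑ i ∈ Finset.range k, ξ i ω} : ℕ) : ℝ) - n| ∂P) ∧
    (μ * ∫ ω, |((sInf {k : ℕ | μ * n < ∑ i ∈ Finset.range k, ξ i ω} : ℕ) : ℝ) - n| ∂P ≤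
      (∫ ω, |(∑ i ∈ Finset.range n, ξ i ω) - μ * n| ∂P) +
        ((∫ ω, (∑ i ∈ Finset.range
            (sInf {k : ℕ | μ * n < ∑ i ∈ Finset.range k, ξ i ω}), ξ i ω) ∂P) - μ * n)) :=
  wald_sandwich_renewal_general P ξ hmeas hindep hident hpos hInt μ hmean n
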